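/- arXiv:1807.05552 — 2 statements merged into one kernel-verified Lean document; each statement's English description precedes it below -/
import Mathlib

section
/- Let r ≥ 0 be an integer. For all integers 0 ≤ ℓ ≤ r and 0 ≤ m ≤ r, the ℓ-th derivative of P_m^1 satisfies (P_m^1)^{(ℓ)}(0) = 0 and (P_m^1)^{(ℓ)}(−1) = δ_{ℓm} (equal to 1 if ℓ = m and 0 otherwise). -/
open Real Set

noncomputable section

/-- The Hermite basis polynomial
`P_m^0(x) = (1/m!) x^m (1+x)^{r+1} ∑_{n=0}^{r-m} (-x)^n C(r+n, n)`. -/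
def P0 (r m : ℕ) (x : ℝ) : ℝ :=
  (1 / (Nat.factorial m) : ℝ) * x ^ m * (1 + x) ^ (r + 1) *
    ∑ n ∈ Finset.range (r - m + 1), (-x) ^ n * (Nat.choose (r + n) n : ℝ)

/-- The Hermite basis polynomial
`P_m^1(x) = (1/m!) (1+x)^m (-x)^{r+1} ∑_{n=0}^{r-m} (1+x)^n C(r+n, n)`. -/
def P1 (r m : ℕ) (x : ℝ) : ℝ :=
  (1 / (Nat.factorial m) : ℝ) * (1 + x) ^ m * (-x) ^ (r + 1) *
    ∑ n ∈ Finset.range (r - m + 1), (1 + x) ^ n * (Nat.choose (r + n) n : ℝ)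

/-- The two-point Hermite interpolation polynomial `P_r(F̂)` of a boundary
data matrix `F̂`. -/
def Pmat (r : ℕ) (A : Fin 2 → Fin (r + 1) → ℝ) (x : ℝ) : ℝ :=
  ∑ m : Fin (r + 1), A 0 m * P0 r (m : ℕ) x + ∑ m : Fin (r + 1), A 1 m * P1 r (m : ℕ) x

/-- The max-norm of a `2 × (r+1)` matrix. -/
def maxNorm {r : ℕ} (A : Fin 2 → Fin (r + 1) → ℝ) : ℝ :=
  Finset.univ.sup' Finset.univ_nonempty (fun p : Fin 2 × Fin (r + 1) => |A p.1 p.2|)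

/-!
Both conditions are read off from Taylor expansions: for `ℓ < N`, the `ℓ`-th derivative of a
polynomial at `a` is `ℓ!` times the `ℓ`-th coefficient of any `q` with `X ^ N ∣ taylor a p - q`.
At `0` the factor `(-x)^(r+1)` gives `q = 0`. At `-1`, in the variable `t = 1 + x`,
`P_m^1 = t^m/m! · (1-t)^(r+1) · ∑_{n ≤ r-m} C(r+n,n) t^n`, and the sum is the truncation of the
series of `(1-t)^(-(r+1))`, so `P_m^1 ≡ t^m/m!` modulo `t^(r+1)`.
-/

open Polynomial

namespace Polynomial

variable {R 𝕜 : Type*} [CommRing R] [NontriviallyNormedField 𝕜]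

theorem iteratedDeriv_eval (p : 𝕜[X]) (n : ℕ) :
    iteratedDeriv n (fun x => p.eval x) = fun x => (derivative^[n] p).eval x := by
  have h : Function.Semiconj (fun (q : 𝕜[X]) x => q.eval x) derivative deriv :=
    fun q => by funext x; exact (Polynomial.deriv ..).symm
  rw [iteratedDeriv_eq_iterate]
  exact (h.iterate_right n p).symm

theorem iteratedDeriv_eval_eq_of_X_pow_dvd_taylor_sub {p q : 𝕜[X]} {a : 𝕜} {N n : ℕ}
    (h : X ^ N ∣ taylor a p - q) (hn : n < N) :
    iteratedDeriv n (fun x => p.eval x) a = n.factorial * q.coeff n := by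
  have hcoeff : (taylor a p).coeff n = q.coeff n := by
    rw [← sub_eq_zero, ← coeff_sub]
    exact X_pow_dvd_iff.mp h n hn
  rw [iteratedDeriv_eval, ← factorial_smul_hasseDeriv, ← hcoeff, taylor_coeff]
  simp [nsmul_eq_mul]

theorem sum_range_X_pow_mul_choose_eq_trunc_invOneSubPow (r N : ℕ) :
    ∑ n ∈ Finset.range N, X ^ n * C ((r + n).choose n : R) =
      PowerSeries.trunc N (PowerSeries.invOneSubPow R (r + 1)).val := by
  ext k
  simp [finsetSum_coeff, PowerSeries.coeff_trunc,
    PowerSeries.invOneSubPow_val_succ_eq_mk_add_choose, ← Nat.choose_symm_add]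

theorem X_pow_dvd_one_sub_X_pow_mul_trunc_invOneSubPow_sub_one (d N : ℕ) :
    X ^ N ∣ (1 - X : R[X]) ^ d * PowerSeries.trunc N (PowerSeries.invOneSubPow R d).val - 1 := by
  have hinv : (((1 - X : R[X]) ^ d : R[X]) : PowerSeries R) * (PowerSeries.invOneSubPow R d).val
      = 1 := by
    rw [coe_pow, coe_sub, coe_one, coe_X, ← PowerSeries.invOneSubPow_inv_eq_one_sub_pow,
      Units.inv_val]
  rw [X_pow_dvd_iff]
  intro k hk
  rw [coeff_sub, sub_eq_zero, ← coeff_coe, ← PowerSeries.coeff_coe_trunc_of_lt hk, coe_mul,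
    mul_comm, PowerSeries.trunc_trunc_mul, mul_comm, hinv, PowerSeries.coeff_coe_trunc_of_lt hk,
    ← coe_one, coeff_coe]

end Polynomial

def P1poly (r m : ℕ) : ℝ[X] :=
  C (m.factorial : ℝ)⁻¹ * (1 + X) ^ m * (-X) ^ (r + 1) *
    ∑ n ∈ Finset.range (r - m + 1), (1 + X) ^ n * C ((r + n).choose n : ℝ)

theorem eval_P1poly (r m : ℕ) : (fun x => (P1poly r m).eval x) = P1 r m := by
  funext x
  simp [P1poly, P1, eval_finsetSum, one_div]

theorem X_pow_dvd_P1poly (r m : ℕ) : X ^ (r + 1) ∣ P1poly r m := by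
  have hneg : X ^ (r + 1) ∣ (-X : ℝ[X]) ^ (r + 1) := by
    rw [neg_pow]; exact dvd_mul_left _ _
  exact hneg.trans ((dvd_mul_left _ _).mul_right _)

theorem taylor_neg_one_P1poly (r m : ℕ) :
    taylor (-1) (P1poly r m) = C (m.factorial : ℝ)⁻¹ * X ^ m *
      ((1 - X) ^ (r + 1) *
        PowerSeries.trunc (r - m + 1) (PowerSeries.invOneSubPow ℝ (r + 1)).val) := by
  have hshift : (1 : ℝ[X]) + (X + -1) = X := by ring
  simp only [← sum_range_X_pow_mul_choose_eq_trunc_invOneSubPow, P1poly, taylor_mul, taylor_pow,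
    map_sum, map_add, map_neg, taylor_one, taylor_X, taylor_C, C_1, hshift]
  ring

theorem X_pow_dvd_taylor_neg_one_P1poly_sub {r m : ℕ} (hm : m ≤ r) :
    X ^ (r + 1) ∣ taylor (-1) (P1poly r m) - C (m.factorial : ℝ)⁻¹ * X ^ m := by
  have h := X_pow_dvd_one_sub_X_pow_mul_trunc_invOneSubPow_sub_one (R := ℝ) (r + 1) (r - m + 1)
  have hX : (X : ℝ[X]) ^ (r + 1) = X ^ m * X ^ (r - m + 1) := by
    rw [← pow_add]; congr 1; omega
  rw [hX, taylor_neg_one_P1poly]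
  convert mul_dvd_mul_left (X ^ m) (h.mul_left (C (m.factorial : ℝ)⁻¹)) using 1
  ring

/-- Interpolation properties of `P_m^1`: for `0 ≤ ℓ, m ≤ r`,
`(P_m^1)^{(ℓ)}(0) = 0` and `(P_m^1)^{(ℓ)}(-1) = δ_{ℓm}`. -/
theorem P1_interpolation (r m ℓ : ℕ) (hm : m ≤ r) (hℓ : ℓ ≤ r) :
    iteratedDeriv ℓ (P1 r m) 0 = 0 ∧
    iteratedDeriv ℓ (P1 r m) (-1) = if ℓ = m then 1 else 0 := by
  rw [← eval_P1poly]
  constructor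
  · have h : X ^ (r + 1) ∣ taylor 0 (P1poly r m) - 0 := by
      simpa using X_pow_dvd_P1poly r m
    rw [iteratedDeriv_eval_eq_of_X_pow_dvd_taylor_sub h (Nat.lt_succ_of_le hℓ), coeff_zero,
      mul_zero]
  · rw [iteratedDeriv_eval_eq_of_X_pow_dvd_taylor_sub (X_pow_dvd_taylor_neg_one_P1poly_sub hm)
      (Nat.lt_succ_of_le hℓ), coeff_C_mul_X_pow]
    split_ifs with h
    · subst h
      field_simp
    · rw [mul_zero]

end
end

section
/- Let r ≥ 1 and f ∈ C^{r,1}([0,1]) with exact boundary data matrix F, and let F̂ be a 2×(r+1) real matrix that is 0-exact with respect to f. Let f_c and f̂_c on [−1,1] be the Hermite continuations equal to f on [0,1] and equal to P_r(F), respectively P_r(F̂), on [−1,0). Then there exists a constant C > 0 depending only on r such that for every integer k ≠ 0, the Fourier coefficient c_k(f̂_c − f_c) = (1/2)∫_{−1}^{0} P_r(F̂ − F)(x) e^{−πikx} dx satisfies |c_k(f̂_c − f_c)| ≤ (C/k²) ‖F̂ − F‖_max. -/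
open Real Set

noncomputable section

open MeasureTheory

/-- Fourier coefficient of `g` on `[-1, 1]`. -/
def fCoeff2 (g : ℝ → ℝ) (k : ℤ) : ℂ :=
  (1 / 2 : ℂ) * ∫ x in (-1 : ℝ)..1,
    (g x : ℂ) * Complex.exp (-(π : ℂ) * Complex.I * (k : ℂ) * (x : ℂ))

/-- The class `C^{r,1}([lo,hi])`. -/
def Cr1 (r : ℕ) (lo hi : ℝ) (f : ℝ → ℝ) : Prop :=
  ContDiffOn ℝ r f (Icc lo hi) ∧
    ∃ K : NNReal, LipschitzOnWith K (iteratedDerivWithin r f (Icc lo hi)) (Icc lo hi)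

/-- The exact boundary data matrix `F` of `f`. -/
def Fmat (r : ℕ) (f : ℝ → ℝ) : Fin 2 → Fin (r + 1) → ℝ :=
  fun j m => iteratedDerivWithin (m : ℕ) f (Icc (0 : ℝ) 1) ((j : ℕ) : ℝ)

/-- Continuation of `f`: `f` on `[0,1]`, `g` for `x < 0`. -/
def extCont (f g : ℝ → ℝ) : ℝ → ℝ := fun x => if 0 ≤ x then f x else g x

/-
Since `F̂` is `0`-exact, the data `D = F̂ - F` has vanishing zeroth column, so `P_r(D)` vanishes
at both `-1` and `0`: `P_m^0` and `P_m^1` interpolate the Kronecker data at `0` and `-1`. The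
difference of the two continuations is `0` on `[0,1]` and `P_r(D)` on `[-1,0)`, so its Fourier
coefficient is an integral over `[-1,0]`. Two integrations by parts against `e^{-πikx}` give the
factor `1/(πk)^2`; the boundary terms of the first vanish, and those of the second, like the
remaining integral, are bounded by `sup |P_r(D)'|` and `sup |P_r(D)''|`. Since `P_r` is linear in
the data, these are at most `‖D‖_max` times a sum, over the basis polynomials, of the absolute
values of the coefficients of their derivatives.
-/

open Polynomial Complex

lemma P0_apply_zero (r m : ℕ) : P0 r m 0 = if m = 0 then 1 else 0 := by
  rcases eq_or_ne m 0 with rfl | hm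
  · simp [P0, Finset.sum_range_succ']
  · simp [P0, zero_pow hm, hm]

lemma P1_apply_zero (r m : ℕ) : P1 r m 0 = 0 := by
  simp [P1]

lemma P0_apply_neg_one (r m : ℕ) : P0 r m (-1) = 0 := by
  simp [P0]

lemma P1_apply_neg_one (r m : ℕ) : P1 r m (-1) = if m = 0 then 1 else 0 := by
  rcases eq_or_ne m 0 with rfl | hm
  · simp [P1, Finset.sum_range_succ']
  · simp [P1, zero_pow hm, hm]

lemma Pmat_apply_zero (r : ℕ) (A : Fin 2 → Fin (r + 1) → ℝ) : Pmat r A 0 = A 0 0 := by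
  simp only [Pmat, P0_apply_zero, P1_apply_zero, Fin.val_eq_zero_iff, mul_ite, mul_one, mul_zero,
    Finset.sum_ite_eq', Finset.mem_univ, if_true, Finset.sum_const_zero, add_zero]

lemma Pmat_apply_neg_one (r : ℕ) (A : Fin 2 → Fin (r + 1) → ℝ) : Pmat r A (-1) = A 1 0 := by
  simp only [Pmat, P0_apply_neg_one, P1_apply_neg_one, Fin.val_eq_zero_iff, mul_ite, mul_one,
    mul_zero, Finset.sum_ite_eq', Finset.mem_univ, if_true, Finset.sum_const_zero, zero_add]

lemma Pmat_sub (r : ℕ) (A B : Fin 2 → Fin (r + 1) → ℝ) (x : ℝ) :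
    Pmat r (A - B) x = Pmat r A x - Pmat r B x := by
  simp only [Pmat, Pi.sub_apply, sub_mul, Finset.sum_sub_distrib]
  ring

lemma abs_le_maxNorm {r : ℕ} (A : Fin 2 → Fin (r + 1) → ℝ) (j : Fin 2) (m : Fin (r + 1)) :
    |A j m| ≤ maxNorm A :=
  Finset.le_sup' (fun p : Fin 2 × Fin (r + 1) => |A p.1 p.2|) (Finset.mem_univ (j, m))

lemma maxNorm_nonneg {r : ℕ} (A : Fin 2 → Fin (r + 1) → ℝ) : 0 ≤ maxNorm A :=
  (abs_nonneg _).trans (abs_le_maxNorm A 0 0)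

namespace Polynomial

def sumAbsCoeff (p : ℝ[X]) : ℝ := ∑ i ∈ Finset.range (p.natDegree + 1), |p.coeff i|

lemma abs_eval_le_sumAbsCoeff (p : ℝ[X]) {x : ℝ} (hx : |x| ≤ 1) :
    |p.eval x| ≤ p.sumAbsCoeff := by
  rw [eval_eq_sum_range]
  refine (Finset.abs_sum_le_sum_abs _ _).trans (Finset.sum_le_sum fun i _ => ?_)
  rw [abs_mul, abs_pow]
  exact mul_le_of_le_one_right (abs_nonneg _) (pow_le_one₀ (abs_nonneg x) hx)

end Polynomial

def hermiteBasis (r : ℕ) : Fin 2 → ℕ → ℝ[X]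
  | 0, m => C (1 / m.factorial : ℝ) * X ^ m * (1 + X) ^ (r + 1) *
      ∑ n ∈ Finset.range (r - m + 1), (-X) ^ n * C ((r + n).choose n : ℝ)
  | 1, m => C (1 / m.factorial : ℝ) * (1 + X) ^ m * (-X) ^ (r + 1) *
      ∑ n ∈ Finset.range (r - m + 1), (1 + X) ^ n * C ((r + n).choose n : ℝ)

lemma eval_hermiteBasis_zero (r m : ℕ) (x : ℝ) : (hermiteBasis r 0 m).eval x = P0 r m x := by
  simp [hermiteBasis, P0, eval_finsetSum]

lemma eval_hermiteBasis_one (r m : ℕ) (x : ℝ) : (hermiteBasis r 1 m).eval x = P1 r m x := by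
  simp [hermiteBasis, P1, eval_finsetSum]

def hermitePoly (r : ℕ) (A : Fin 2 → Fin (r + 1) → ℝ) : ℝ[X] :=
  ∑ p : Fin 2 × Fin (r + 1), A p.1 p.2 • hermiteBasis r p.1 p.2

lemma eval_hermitePoly (r : ℕ) (A : Fin 2 → Fin (r + 1) → ℝ) (x : ℝ) :
    (hermitePoly r A).eval x = Pmat r A x := by
  simp [hermitePoly, Pmat, eval_finsetSum, Fintype.sum_prod_type, Fin.sum_univ_two,
    eval_hermiteBasis_zero, eval_hermiteBasis_one]

def hermiteDerivBound (r n : ℕ) : ℝ :=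
  ∑ p : Fin 2 × Fin (r + 1), (derivative^[n] (hermiteBasis r p.1 p.2)).sumAbsCoeff

lemma hermiteDerivBound_nonneg (r n : ℕ) : 0 ≤ hermiteDerivBound r n :=
  Finset.sum_nonneg fun _ _ => Finset.sum_nonneg fun _ _ => abs_nonneg _

lemma abs_eval_iterate_derivative_hermitePoly_le (r n : ℕ) (A : Fin 2 → Fin (r + 1) → ℝ)
    {x : ℝ} (hx : |x| ≤ 1) :
    |(derivative^[n] (hermitePoly r A)).eval x| ≤ maxNorm A * hermiteDerivBound r n := by
  simp only [hermitePoly, hermiteDerivBound, iterate_derivative_sum, iterate_derivative_smul,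
    eval_finsetSum, eval_smul, smul_eq_mul, Finset.mul_sum]
  refine (Finset.abs_sum_le_sum_abs _ _).trans (Finset.sum_le_sum fun p _ => ?_)
  rw [abs_mul]
  exact mul_le_mul (abs_le_maxNorm A _ _) (abs_eval_le_sumAbsCoeff _ hx) (abs_nonneg _)
    (maxNorm_nonneg A)

lemma hasDerivAt_cexp_mul_div {c : ℂ} (hc : c ≠ 0) (x : ℝ) :
    HasDerivAt (fun y : ℝ => cexp (c * y) / c) (cexp (c * x)) x := by
  have h := ((hasDerivAt_id (x : ℂ)).const_mul c).comp_ofReal.cexp.div_const c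
  simpa [hc] using h

lemma norm_cexp_mul_ofReal {c : ℂ} (hc : c.re = 0) (x : ℝ) : ‖cexp (c * x)‖ = 1 := by
  simp [Complex.norm_exp, hc]

lemma integral_eval_mul_cexp (p : ℝ[X]) {c : ℂ} (hc : c ≠ 0) (a b : ℝ) :
    ∫ x in a..b, ((p.eval x : ℝ) : ℂ) * cexp (c * x) =
      (((p.eval b : ℝ) : ℂ) * cexp (c * b) - ((p.eval a : ℝ) : ℂ) * cexp (c * a)) / c -
        (∫ x in a..b, ((p.derivative.eval x : ℝ) : ℂ) * cexp (c * x)) / c := by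
  have h := intervalIntegral.integral_mul_deriv_eq_deriv_mul
    (fun x _ => (p.hasDerivAt x).ofReal_comp) (fun x _ => hasDerivAt_cexp_mul_div hc x)
    ((continuous_ofReal.comp p.derivative.continuous).intervalIntegrable a b)
    ((by fun_prop : Continuous fun x : ℝ => cexp (c * x)).intervalIntegrable a b)
  rw [h, ← intervalIntegral.integral_div]
  simp only [mul_div_assoc, sub_div]

lemma norm_integral_eval_mul_cexp_le (p : ℝ[X]) {c : ℂ} (hc : c.re = 0) {a b M : ℝ}
    (hab : a ≤ b) (hM : ∀ x ∈ Icc a b, |p.eval x| ≤ M) :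
    ‖∫ x in a..b, ((p.eval x : ℝ) : ℂ) * cexp (c * x)‖ ≤ M * (b - a) := by
  refine (intervalIntegral.norm_integral_le_of_norm_le_const fun x hx => ?_).trans_eq
    (by rw [abs_of_nonneg (sub_nonneg.2 hab)])
  rw [uIoc_of_le hab] at hx
  rw [norm_mul, norm_cexp_mul_ofReal hc, mul_one, norm_real, Real.norm_eq_abs]
  exact hM x (Ioc_subset_Icc_self hx)

lemma norm_integral_eval_mul_cexp_le_of_eval_eq_zero (p : ℝ[X]) {c : ℂ} (hc₀ : c ≠ 0)
    (hc : c.re = 0) {a b M₁ M₂ : ℝ} (hab : a ≤ b) (ha : p.eval a = 0) (hb : p.eval b = 0)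
    (hM₁ : ∀ x ∈ Icc a b, |p.derivative.eval x| ≤ M₁)
    (hM₂ : ∀ x ∈ Icc a b, |p.derivative.derivative.eval x| ≤ M₂) :
    ‖∫ x in a..b, ((p.eval x : ℝ) : ℂ) * cexp (c * x)‖ ≤
      (2 * M₁ + M₂ * (b - a)) / ‖c‖ ^ 2 := by
  have hc_pos : 0 < ‖c‖ := norm_pos_iff.2 hc₀
  have boundary (x : ℝ) (hx : x ∈ Icc a b) :
      ‖((p.derivative.eval x : ℝ) : ℂ) * cexp (c * x)‖ ≤ M₁ := by
    rw [norm_mul, norm_cexp_mul_ofReal hc, mul_one, norm_real, Real.norm_eq_abs]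
    exact hM₁ x hx
  have hp' : ‖∫ x in a..b, ((p.derivative.eval x : ℝ) : ℂ) * cexp (c * x)‖ ≤
      (2 * M₁ + M₂ * (b - a)) / ‖c‖ := by
    rw [integral_eval_mul_cexp _ hc₀, ← sub_div, norm_div]
    gcongr
    refine (norm_sub_le _ _).trans (add_le_add ((norm_sub_le _ _).trans ?_)
      (norm_integral_eval_mul_cexp_le _ hc hab hM₂))
    linarith [boundary b (right_mem_Icc.2 hab), boundary a (left_mem_Icc.2 hab)]
  rw [integral_eval_mul_cexp _ hc₀, ha, hb]
  simp only [ofReal_zero, zero_mul, sub_self, zero_div, zero_sub, norm_neg, norm_div]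
  rw [pow_two, ← div_div]
  gcongr

lemma continuous_Pmat (r : ℕ) (A : Fin 2 → Fin (r + 1) → ℝ) : Continuous (Pmat r A) := by
  simpa only [eval_hermitePoly] using (hermitePoly r A).continuous

lemma norm_integral_Pmat_mul_cexp_le (r : ℕ) (A : Fin 2 → Fin (r + 1) → ℝ)
    (h₀ : A 0 0 = 0) (h₁ : A 1 0 = 0) {c : ℂ} (hc₀ : c ≠ 0) (hc : c.re = 0) :
    ‖∫ x in (-1 : ℝ)..0, ((Pmat r A x : ℝ) : ℂ) * cexp (c * x)‖ ≤
      maxNorm A * (2 * hermiteDerivBound r 1 + hermiteDerivBound r 2) / ‖c‖ ^ 2 := by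
  have hderiv (n : ℕ) (x : ℝ) (hx : x ∈ Icc (-1 : ℝ) 0) :=
    abs_eval_iterate_derivative_hermitePoly_le r n A (abs_le.2 ⟨hx.1, hx.2.trans zero_le_one⟩)
  have h := norm_integral_eval_mul_cexp_le_of_eval_eq_zero (hermitePoly r A) hc₀ hc
    (by norm_num) (by rwa [eval_hermitePoly, Pmat_apply_neg_one])
    (by rwa [eval_hermitePoly, Pmat_apply_zero]) (hderiv 1) (hderiv 2)
  simp only [eval_hermitePoly] at h
  convert h using 2
  ring

lemma extCont_sub_extCont (f g h : ℝ → ℝ) (x : ℝ) :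
    extCont f g x - extCont f h x = extCont 0 (fun y => g y - h y) x := by
  by_cases hx : 0 ≤ x <;> simp [extCont, hx]

lemma fCoeff2_extCont_zero {v : ℝ → ℝ} (hv : Continuous v) (hv₀ : v 0 = 0) (k : ℤ) :
    fCoeff2 (extCont 0 v) k =
      1 / 2 * ∫ x in (-1 : ℝ)..0, (v x : ℂ) * cexp (-(π : ℂ) * I * k * x) := by
  have hneg : EqOn (fun x : ℝ => (extCont 0 v x : ℂ) * cexp (-(π : ℂ) * I * k * x))
      (fun x => (v x : ℂ) * cexp (-(π : ℂ) * I * k * x)) (uIcc (-1) 0) := by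
    intro x hx
    rw [uIcc_of_le (by norm_num)] at hx
    rcases hx.2.lt_or_eq with hx | rfl
    · simp [extCont, hx.not_ge]
    · simp [extCont, hv₀]
  have hpos : EqOn (fun x : ℝ => (extCont 0 v x : ℂ) * cexp (-(π : ℂ) * I * k * x)) 0
      (uIcc 0 1) := by
    intro x hx
    rw [uIcc_of_le zero_le_one] at hx
    simp [extCont, hx.1]
  have hcont : Continuous fun x : ℝ => (v x : ℂ) * cexp (-(π : ℂ) * I * k * x) := by fun_prop
  rw [fCoeff2, ← intervalIntegral.integral_add_adjacent_intervals (b := 0)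
      ((hcont.continuousOn.congr hneg).intervalIntegrable)
      ((continuousOn_const.congr hpos).intervalIntegrable),
    intervalIntegral.integral_congr hneg, intervalIntegral.integral_congr hpos]
  simp

lemma norm_neg_pi_mul_I_mul_intCast (k : ℤ) : ‖-(π : ℂ) * I * k‖ = π * |(k : ℝ)| := by
  simp [abs_of_pos pi_pos]

lemma norm_half_integral_Pmat_mul_fourier_le (r : ℕ) (A : Fin 2 → Fin (r + 1) → ℝ)
    (h₀ : A 0 0 = 0) (h₁ : A 1 0 = 0) {k : ℤ} (hk : k ≠ 0) :
    ‖1 / 2 * ∫ x in (-1 : ℝ)..0, ((Pmat r A x : ℝ) : ℂ) * cexp (-(π : ℂ) * I * k * x)‖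
      ≤ (hermiteDerivBound r 1 + hermiteDerivBound r 2 + 1) / (k : ℝ) ^ 2 * maxNorm A := by
  set c : ℂ := -(π : ℂ) * I * k
  have hc : ‖c‖ = π * |(k : ℝ)| := norm_neg_pi_mul_I_mul_intCast k
  have hc₀ : c ≠ 0 := norm_pos_iff.1 (by rw [hc]; positivity)
  have hk_le_c : (k : ℝ) ^ 2 ≤ ‖c‖ ^ 2 := by
    rw [hc, mul_pow, sq_abs]
    exact le_mul_of_one_le_left (sq_nonneg _) (one_le_pow₀ (by linarith [pi_gt_three]))
  have hbound := norm_integral_Pmat_mul_cexp_le r A h₀ h₁ hc₀ (by simp [c])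
  have hA := maxNorm_nonneg A
  have hB₁ := hermiteDerivBound_nonneg r 1
  have hB₂ := hermiteDerivBound_nonneg r 2
  rw [norm_mul, show ‖(1 / 2 : ℂ)‖ = 1 / 2 by norm_num]
  calc 1 / 2 * ‖∫ x in (-1 : ℝ)..0, ((Pmat r A x : ℝ) : ℂ) * cexp (c * x)‖
      ≤ 1 / 2 * (maxNorm A * (2 * hermiteDerivBound r 1 + hermiteDerivBound r 2) / ‖c‖ ^ 2) :=
        mul_le_mul_of_nonneg_left hbound (by norm_num)
    _ ≤ maxNorm A * (2 * (hermiteDerivBound r 1 + hermiteDerivBound r 2 + 1)) /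
          (2 * (k : ℝ) ^ 2) := by
        rw [← mul_div_assoc, one_div_mul_eq_div, div_div]
        gcongr
        linarith
    _ = (hermiteDerivBound r 1 + hermiteDerivBound r 2 + 1) / (k : ℝ) ^ 2 * maxNorm A := by
        field_simp

theorem hermite_coeff_difference_decay_general (r : ℕ) :
    ∃ C > 0, ∀ f : ℝ → ℝ, Cr1 r 0 1 f →
      ∀ Fh : Fin 2 → Fin (r + 1) → ℝ,
        (Fh 0 0 = Fmat r f 0 0 ∧ Fh 1 0 = Fmat r f 1 0) →
        ∀ k : ℤ, k ≠ 0 →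
          fCoeff2 (fun x => extCont f (Pmat r Fh) x - extCont f (Pmat r (Fmat r f)) x) k
            = (1 / 2 : ℂ) * ∫ x in (-1 : ℝ)..0,
                ((Pmat r (fun j m => Fh j m - Fmat r f j m) x : ℝ) : ℂ) *
                  Complex.exp (-(π : ℂ) * Complex.I * (k : ℂ) * (x : ℂ)) ∧
          ‖(fCoeff2 (fun x => extCont f (Pmat r Fh) x - extCont f (Pmat r (Fmat r f)) x) k)‖
            ≤ C / (k : ℝ) ^ 2 * maxNorm (fun j m => Fh j m - Fmat r f j m) := by
  refine ⟨hermiteDerivBound r 1 + hermiteDerivBound r 2 + 1,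
    by linarith [hermiteDerivBound_nonneg r 1, hermiteDerivBound_nonneg r 2],
    fun f _ Fh ⟨h₀, h₁⟩ k hk => ?_⟩
  have hcoeff : fCoeff2 (fun x => extCont f (Pmat r Fh) x - extCont f (Pmat r (Fmat r f)) x) k
      = 1 / 2 * ∫ x in (-1 : ℝ)..0,
          ((Pmat r (Fh - Fmat r f) x : ℝ) : ℂ) * cexp (-(π : ℂ) * I * k * x) := by
    simp only [extCont_sub_extCont, ← Pmat_sub]
    exact fCoeff2_extCont_zero (continuous_Pmat r _) (by simp [Pmat_apply_zero, h₀]) k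
  exact ⟨hcoeff, hcoeff ▸ norm_half_integral_Pmat_mul_fourier_le r _ (by simp [h₀])
    (by simp [h₁]) hk⟩

/-- For a `0`-exact boundary data matrix `F̂`, the Fourier coefficients of the
difference of the Hermite continuations built from `F̂` and from the exact data `F`
satisfy `c_k(f̂_c - f_c) = (1/2)∫_{-1}^0 P_r(F̂-F)(x) e^{-πikx} dx` and decay like
`(C/k²) ‖F̂ - F‖_max`, with `C > 0` depending only on `r`. -/
theorem hermite_coeff_difference_decay (r : ℕ) (hr : 1 ≤ r) :
    ∃ C > 0, ∀ f : ℝ → ℝ, Cr1 r 0 1 f →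
      ∀ Fh : Fin 2 → Fin (r + 1) → ℝ,
        (Fh 0 0 = Fmat r f 0 0 ∧ Fh 1 0 = Fmat r f 1 0) →
        ∀ k : ℤ, k ≠ 0 →
          fCoeff2 (fun x => extCont f (Pmat r Fh) x - extCont f (Pmat r (Fmat r f)) x) k
            = (1 / 2 : ℂ) * ∫ x in (-1 : ℝ)..0,
                ((Pmat r (fun j m => Fh j m - Fmat r f j m) x : ℝ) : ℂ) *
                  Complex.exp (-(π : ℂ) * Complex.I * (k : ℂ) * (x : ℂ)) ∧
          ‖(fCoeff2 (fun x => extCont f (Pmat r Fh) x - extCont f (Pmat r (Fmat r f)) x) k)‖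
            ≤ C / (k : ℝ) ^ 2 * maxNorm (fun j m => Fh j m - Fmat r f j m) :=
  hermite_coeff_difference_decay_general r
end
end
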